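/- arXiv:2512.18118 — 2 statements merged into one kernel-verified Lean document; each statement's English description precedes it below -/
import Mathlib

section
/- Fixed-sequence (Learn-Then-Test) calibration along a single path is valid: let λ₁ > λ₂ > … > λ_K be a fixed decreasing sequence of thresholds with monotone risk r(λ₁) ≤ r(λ₂) ≤ … ≤ r(λ_K), and let UCB(λ_k) be random upper bounds such that P(r(λ_k) > UCB(λ_k)) ≤ δ for each fixed k. Define λ̂ = λ_{k̂} where k̂ is the largest index k such that UCB(λ_j) ≤ α for all j ≤ k, with λ̂ undefined (abstain) if UCB(λ₁) > α. Then P(λ̂ is defined and r(λ̂) > α) ≤ δ. -/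
open MeasureTheory ProbabilityTheory

/-- Fixed-sequence (Learn-Then-Test) calibration along a single path is valid:
thresholds `λ₁ > ⋯ > λ_K` with monotone nondecreasing risk `r(λ₁) ≤ ⋯ ≤ r(λ_K)` along the
path, pointwise UCBs with `P(r(λ_k) > UCB(λ_k)) ≤ δ` for each fixed `k`, and `k̂` the largest
index such that `UCB(λ_j) ≤ α` for all `j ≤ k̂` (defined only when `UCB(λ₁) ≤ α`). Then
`P(λ̂ defined and r(λ̂) > α) ≤ δ`. -/
theorem ltt_single_path_valid
    {Ω : Type*} [MeasurableSpace Ω] (μ : Measure Ω) [IsProbabilityMeasure μ]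
    (K : ℕ) (hK : 0 < K)
    (lam : Fin K → ℝ) (hlam : StrictAnti lam)
    (r : Fin K → ℝ) (hr : Monotone r)
    (UCB : Fin K → Ω → ℝ) (hmeas : ∀ k, Measurable (UCB k))
    (α δ : ℝ) (hα : α ∈ Set.Ioo (0:ℝ) 1) (hδ : δ ∈ Set.Ioo (0:ℝ) 1)
    (hcov : ∀ k, μ {ω | UCB k ω < r k} ≤ ENNReal.ofReal δ)
    (khat : Ω → Fin K)
    (hpath : ∀ ω, UCB ⟨0, hK⟩ ω ≤ α → ∀ j ≤ khat ω, UCB j ω ≤ α)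
    (hmax : ∀ ω, UCB ⟨0, hK⟩ ω ≤ α → ∀ k : Fin K, (∀ j ≤ k, UCB j ω ≤ α) → k ≤ khat ω) :
    μ {ω | UCB ⟨0, hK⟩ ω ≤ α ∧ α < r (khat ω)} ≤ ENNReal.ofReal δ := by
  by_cases h : ∃ k, α < r k
  · have hne : (Finset.univ.filter (fun k => α < r k)).Nonempty := by
      obtain ⟨k, hk⟩ := h
      exact ⟨k, by simp [hk]⟩
    set kst := (Finset.univ.filter (fun k => α < r k)).min' hne with hkst
    have hmem : kst ∈ Finset.univ.filter (fun k => α < r k) := Finset.min'_mem _ _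
    have hrk : α < r kst := by simpa using hmem
    have hsub : {ω | UCB ⟨0, hK⟩ ω ≤ α ∧ α < r (khat ω)} ⊆ {ω | UCB kst ω < r kst} := by
      intro ω ⟨h1, h2⟩
      have hle : kst ≤ khat ω := Finset.min'_le _ _ (by simp [h2])
      have := hpath ω h1 kst hle
      exact lt_of_le_of_lt this hrk
    exact le_trans (measure_mono hsub) (hcov kst)
  · push_neg at h
    have : {ω | UCB ⟨0, hK⟩ ω ≤ α ∧ α < r (khat ω)} = ∅ := by
      ext ω; simp only [Set.mem_setOf_eq, Set.mem_empty_iff_false, iff_false]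
      rintro ⟨-, h2⟩
      exact absurd h2 (not_lt.mpr (h _))
    simp [this]
end

section
/- BH with marginally super-uniform p-values under independence controls a marginal FDR-type quantity: let p₁,…,p_m be independent random variables, each paired with a random null indicator H_j ∈ {0,1}, such that P(p_j ≤ t, H_j = 1) ≤ t for all t ∈ [0,1] and all j, and suppose (p_j, H_j) are jointly independent across j. Let R = max{k : p_(k) ≤ αk/m} and S = {j : p_j ≤ αR/m} be the BH rejection set at level α. Then E[ |{j ∈ S : H_j = 1}| / max(1, |S|) ] ≤ α. -/
open MeasureTheory ProbabilityTheory

/-- The number of rejections of the Benjamini–Hochberg procedure at level `α` applied to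
`m` p-values: the largest `k ≤ m` such that at least `k` of the p-values are `≤ αk/m`
(equivalently, `max{k : p_(k) ≤ αk/m}`). -/
noncomputable def BHnum (m : ℕ) (α : ℝ) (p : Fin m → ℝ) : ℕ :=
  ((Finset.range (m + 1)).filter
    (fun k : ℕ => k ≤ (Finset.univ.filter (fun j : Fin m => p j ≤ α * (k : ℝ) / m)).card)).max'
    ⟨0, by simp⟩

/-- The Benjamini–Hochberg rejection set `S = {j : p_j ≤ α R / m}` with `R = BHnum`. -/
noncomputable def BHset (m : ℕ) (α : ℝ) (p : Fin m → ℝ) : Finset (Fin m) :=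
  Finset.univ.filter (fun j => p j ≤ α * (BHnum m α p) / m)

/-
Let `R_j` be the number of BH rejections after replacing `p_j` by `0`. Hypothesis `j` is
rejected iff `p_j ≤ α R_j / m`, and then `R = R_j`; hence the false discovery proportion equals
`∑_j 1{p_j ≤ α R_j / m, H_j = 1} / R_j`. As `R_j` is a function of the other pairs, it is
independent of `(p_j, H_j)`, so by super-uniformity the `j`-th term has expectation at most
`∑_k P(R_j = k) · (α k / m) / k ≤ α / m`. Summing over `j` gives `α`.
-/

open Finset Function

section Deterministic

variable {m : ℕ} {α : ℝ}

lemma BHnum_le_and_le_card (p : Fin m → ℝ) :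
    BHnum m α p ≤ m ∧ BHnum m α p ≤ #{j | p j ≤ α * BHnum m α p / m} := by
  have h : BHnum m α p ∈
      (range (m + 1)).filter (fun k : ℕ => k ≤ #{j | p j ≤ α * k / m}) := max'_mem _ _
  simpa [Nat.lt_succ_iff] using h

lemma le_BHnum {p : Fin m → ℝ} {k : ℕ} (hk : k ≤ m) (h : k ≤ #{j | p j ≤ α * k / m}) :
    k ≤ BHnum m α p :=
  le_max' _ _ (by simpa [Nat.lt_succ_iff] using ⟨hk, h⟩)

lemma BHnum_le_of_imp {p q : Fin m → ℝ}
    (h : ∀ j, p j ≤ α * BHnum m α p / m → q j ≤ α * BHnum m α p / m) :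
    BHnum m α p ≤ BHnum m α q :=
  le_BHnum (BHnum_le_and_le_card p).1 <|
    (BHnum_le_and_le_card p).2.trans (card_le_card fun j => by simpa using h j)

lemma BHnum_eq_sup' (p : Fin m → ℝ) :
    BHnum m α p = (range (m + 1)).sup' nonempty_range_add_one
      (fun k => if k ≤ #{j | p j ≤ α * k / m} then k else 0) := by
  obtain ⟨hRm, hR⟩ := BHnum_le_and_le_card (α := α) p
  refine le_antisymm ?_ (sup'_le _ _ fun k hk => ?_)
  · exact le_trans (by simp [hR]) (le_sup' _ (mem_range_succ_iff.2 hRm))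
  · split_ifs with h
    · exact le_BHnum (mem_range_succ_iff.1 hk) h
    · exact Nat.zero_le _

lemma measurable_card_filter_le (t : ℝ) :
    Measurable fun p : Fin m → ℝ => #{j | p j ≤ t} := by
  simp only [card_filter]
  exact Finset.measurable_sum _ fun j _ =>
    Measurable.ite (measurableSet_le (measurable_pi_apply j) measurable_const)
      measurable_const measurable_const

lemma measurable_BHnum : Measurable (BHnum m α) := by
  rw [funext BHnum_eq_sup']
  exact Finset.measurable_range_sup'' fun k _ =>
    Measurable.ite (measurable_card_filter_le _ measurableSet_Ici) measurable_const measurable_const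

lemma card_BHset (hα : 0 ≤ α) (p : Fin m → ℝ) : #(BHset m α p) = BHnum m α p := by
  have hR : BHnum m α p ≤ #(BHset m α p) := (BHnum_le_and_le_card p).2
  refine le_antisymm (le_BHnum (by simpa using card_le_univ (BHset m α p)) ?_) hR
  exact card_le_card fun j hj =>
    mem_filter.2 ⟨mem_univ j, (mem_filter.1 hj).2.trans (by gcongr)⟩

lemma BHnum_le_BHnum_update_zero (hα : 0 ≤ α) (p : Fin m → ℝ) (j : Fin m) :
    BHnum m α p ≤ BHnum m α (update p j 0) := by
  refine BHnum_le_of_imp fun i hi => ?_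
  rcases eq_or_ne i j with rfl | hij
  · rw [update_self]; positivity
  · rwa [update_of_ne hij]

lemma one_le_BHnum_update_zero (hα : 0 < α) (p : Fin m → ℝ) (j : Fin m) :
    1 ≤ BHnum m α (update p j 0) :=
  le_BHnum j.pos <| one_le_card.2
    ⟨j, by simp only [mem_filter, mem_univ, true_and, update_self]; positivity⟩

lemma BHnum_update_zero_le {p : Fin m → ℝ} {j : Fin m}
    (h : p j ≤ α * BHnum m α (update p j 0) / m) :
    BHnum m α (update p j 0) ≤ BHnum m α p := by
  refine BHnum_le_of_imp fun i hi => ?_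
  rcases eq_or_ne i j with rfl | hij
  · exact h
  · rwa [update_of_ne hij] at hi

lemma le_BHnum_iff_le_BHnum_update_zero (hα : 0 ≤ α) (p : Fin m → ℝ) (j : Fin m) :
    p j ≤ α * BHnum m α p / m ↔ p j ≤ α * BHnum m α (update p j 0) / m := by
  refine ⟨fun h => h.trans (by gcongr; exact BHnum_le_BHnum_update_zero hα p j), fun h => ?_⟩
  rwa [le_antisymm (BHnum_le_BHnum_update_zero hα p j) (BHnum_update_zero_le h)]

lemma card_filter_BHset_div_max (hα : 0 < α) (p : Fin m → ℝ) (b : Fin m → Bool) :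
    (#{j ∈ BHset m α p | b j = true} : ℝ) / max 1 (#(BHset m α p) : ℝ) =
      ∑ j, if p j ≤ α * BHnum m α (update p j 0) / m ∧ b j = true
        then (BHnum m α (update p j 0) : ℝ)⁻¹ else 0 := by
  rw [card_BHset hα.le, BHset, filter_filter, card_filter, Nat.cast_sum, sum_div]
  refine sum_congr rfl fun j _ => ?_
  simp only [le_BHnum_iff_le_BHnum_update_zero hα.le p j]
  by_cases hj : p j ≤ α * BHnum m α (update p j 0) / m
  · have hR := le_antisymm (BHnum_le_BHnum_update_zero hα.le p j) (BHnum_update_zero_le hj)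
    have h1 : (1 : ℝ) ≤ BHnum m α p := by
      exact_mod_cast hR ▸ one_le_BHnum_update_zero hα p j
    rw [← hR, max_eq_right h1]
    split_ifs <;> simp
  · simp [hj]

end Deterministic

section Probability

variable {Ω β : Type*} {N : Ω → ℕ} {Y : Ω → β} {s : Finset ℕ} {P : ℕ → β → Prop}
  [∀ k, DecidablePred (P k)]

lemma ite_inv_eq_sum_indicator (hNs : ∀ ω, N ω ∈ s) (ω : Ω) :
    (if P (N ω) (Y ω) then (N ω : ℝ)⁻¹ else 0) =
      ∑ k ∈ s, (N ⁻¹' {k} ∩ {ω | P k (Y ω)}).indicator (fun _ => (k : ℝ)⁻¹) ω := by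
  rw [sum_eq_single_of_mem (N ω) (hNs ω)
    fun k _ hk => Set.indicator_of_notMem (fun h => hk h.1.symm) _]
  by_cases h : P (N ω) (Y ω) <;> simp [h]

variable [MeasurableSpace Ω] [MeasurableSpace β] {μ : Measure Ω}

lemma ProbabilityTheory.iIndepFun.indepFun_update {ι : Type*} [Fintype ι] [DecidableEq ι]
    {X : ι → Ω → β} (hX : iIndepFun X μ) (hXm : ∀ i, Measurable (X i)) (j : ι) (y : β) :
    IndepFun (fun ω => update (fun i => X i ω) j y) (X j) μ := by
  let φ : (({j}ᶜ : Finset ι) → β) → ι → β := fun v i =>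
    if hi : i = j then y else v ⟨i, by simpa using hi⟩
  have hφ : Measurable φ := measurable_pi_lambda _ fun i => by
    by_cases hi : i = j
    · simp only [φ, hi, dite_true]; exact measurable_const
    · simp only [φ, hi, dite_false]; exact measurable_pi_apply _
  have hψ : Measurable fun w : ({j} : Finset ι) → β => w ⟨j, mem_singleton_self j⟩ :=
    measurable_pi_apply _
  convert (hX.indepFun_finset {j}ᶜ {j} disjoint_compl_left hXm).comp hφ hψ using 1
  · ext ω i
    rcases eq_or_ne i j with rfl | hij <;> simp [φ, *]
  · rfl

variable [IsProbabilityMeasure μ]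

-- Since `(0 : ℝ)⁻¹ = 0`, the event `N = 0` contributes nothing and needs no bound.
lemma integral_ite_inv_le_of_indepFun (hN : Measurable N) (hY : Measurable Y)
    (hNY : IndepFun N Y μ) (hNs : ∀ ω, N ω ∈ s) (hP : ∀ k, MeasurableSet {y | P k y})
    {c : ℝ} (hc : 0 ≤ c)
    (hPc : ∀ k ∈ s, 0 < k → μ.real {ω | P k (Y ω)} ≤ c * k) :
    Integrable (fun ω => if P (N ω) (Y ω) then (N ω : ℝ)⁻¹ else 0) μ ∧
      ∫ ω, (if P (N ω) (Y ω) then (N ω : ℝ)⁻¹ else 0) ∂μ ≤ c := by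
  have hmeas : ∀ k, MeasurableSet (N ⁻¹' {k} ∩ {ω | P k (Y ω)}) :=
    fun k => (hN (measurableSet_singleton k)).inter (hY (hP k))
  have hint : ∀ k ∈ s,
      Integrable ((N ⁻¹' {k} ∩ {ω | P k (Y ω)}).indicator fun _ => (k : ℝ)⁻¹) μ :=
    fun k _ => (integrable_const _).indicator (hmeas k)
  simp_rw [ite_inv_eq_sum_indicator hNs]
  refine ⟨integrable_finsetSum s hint, ?_⟩
  rw [integral_finsetSum s hint]
  calc _ = ∑ k ∈ s, μ.real (N ⁻¹' {k}) * (μ.real {ω | P k (Y ω)} * (k : ℝ)⁻¹) := by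
        refine sum_congr rfl fun k _ => ?_
        rw [integral_indicator_const _ (hmeas k), smul_eq_mul, ← mul_assoc, measureReal_def,
          measureReal_def, measureReal_def, ← ENNReal.toReal_mul]
        exact congrArg (fun x => x.toReal * _)
          (hNY.measure_inter_preimage_eq_mul _ _ (measurableSet_singleton k) (hP k))
    _ ≤ ∑ k ∈ s, μ.real (N ⁻¹' {k}) * c := by
        refine sum_le_sum fun k hk => mul_le_mul_of_nonneg_left ?_ measureReal_nonneg
        rcases Nat.eq_zero_or_pos k with rfl | hk0
        · simpa using hc
        · rw [← div_eq_mul_inv, div_le_iff₀ (by positivity)]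
          exact hPc k hk hk0
    _ ≤ c := by
        rw [← sum_mul]
        refine mul_le_of_le_one_left hc ?_
        simpa using sum_measureReal_le_measureReal_univ (μ := μ)
          (fun k _ => hN (measurableSet_singleton k))
          (fun a _ b _ hab => Set.disjoint_left.2 fun ω ha hb => hab (ha.symm.trans hb))

end Probability

section BenjaminiHochberg

variable {Ω : Type*} [MeasurableSpace Ω] {μ : Measure Ω} {m : ℕ} {α : ℝ}

lemma measurable_BHnum_update_zero {p : Fin m → Ω → ℝ} (hp : ∀ j, Measurable (p j))
    (j : Fin m) :
    Measurable fun ω => BHnum m α (update (fun i => p i ω) j 0) :=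
  measurable_BHnum.comp (measurable_update_left.comp (measurable_pi_lambda _ hp))

lemma indepFun_BHnum_update_zero {p : Fin m → Ω → ℝ} {H : Fin m → Ω → Bool}
    (hp : ∀ j, Measurable (p j)) (hH : ∀ j, Measurable (H j))
    (hindep : iIndepFun (fun j ω => (p j ω, H j ω)) μ) (j : Fin m) :
    IndepFun (fun ω => BHnum m α (update (fun i => p i ω) j 0))
      (fun ω => (p j ω, H j ω)) μ := by
  have hg : Measurable fun x : Fin m → ℝ × Bool => BHnum m α fun i => (x i).1 :=
    measurable_BHnum.comp (by fun_prop)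
  convert (hindep.indepFun_update (fun i => (hp i).prodMk (hH i)) j (0, false)).comp
    hg measurable_id using 1
  · ext ω
    simp only [comp_apply, apply_update (fun _ (y : ℝ × Bool) => y.1)]
  · rfl

lemma measureReal_le_BH_threshold {q : Ω → ℝ} {b : Ω → Bool}
    (hsuper : ∀ t ∈ Set.Icc (0:ℝ) 1,
      μ {ω | q ω ≤ t ∧ b ω = true} ≤ ENNReal.ofReal t)
    (hα0 : 0 ≤ α) (hα1 : α ≤ 1) {k : ℕ} (hk : k ≤ m) :
    μ.real {ω | q ω ≤ α * k / m ∧ b ω = true} ≤ α / m * k := by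
  have hαk : α * k ≤ m :=
    (mul_le_of_le_one_left k.cast_nonneg hα1).trans (by exact_mod_cast hk)
  have ht : α * k / m ∈ Set.Icc (0:ℝ) 1 :=
    ⟨by positivity, div_le_one_of_le₀ hαk m.cast_nonneg⟩
  exact (ENNReal.toReal_le_of_le_ofReal ht.1 (hsuper _ ht)).trans_eq (by ring)

end BenjaminiHochberg

theorem bh_marginal_fdr_control_general
    {Ω : Type*} [MeasurableSpace Ω] (μ : Measure Ω) [IsProbabilityMeasure μ]
    (m : ℕ) (α : ℝ) (hα : α ∈ Set.Ioo (0:ℝ) 1)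
    (p : Fin m → Ω → ℝ) (H : Fin m → Ω → Bool)
    (hp : ∀ j, Measurable (p j)) (hH : ∀ j, Measurable (H j))
    (hindep : iIndepFun (fun j ω => (p j ω, H j ω)) μ)
    (hsuper : ∀ j, ∀ t ∈ Set.Icc (0:ℝ) 1,
      μ {ω | p j ω ≤ t ∧ H j ω = true} ≤ ENNReal.ofReal t) :
    ∫ ω, (((BHset m α (fun j => p j ω)).filter (fun j => H j ω = true)).card : ℝ)
        / max 1 (((BHset m α (fun j => p j ω)).card : ℝ)) ∂μ ≤ α := by
  obtain ⟨hα0, hα1⟩ := hα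
  let f : Fin m → Ω → ℝ := fun j ω =>
    if p j ω ≤ α * BHnum m α (update (fun i => p i ω) j 0) / m ∧ H j ω = true
    then (BHnum m α (update (fun i => p i ω) j 0) : ℝ)⁻¹ else 0
  have hf : ∀ j, Integrable (f j) μ ∧ ∫ ω, f j ω ∂μ ≤ α / m := fun j =>
    integral_ite_inv_le_of_indepFun
      (P := fun k (y : ℝ × Bool) => y.1 ≤ α * k / m ∧ y.2 = true)
      (measurable_BHnum_update_zero hp j) ((hp j).prodMk (hH j))
      (indepFun_BHnum_update_zero hp hH hindep j)
      (fun ω => mem_range_succ_iff.2 (BHnum_le_and_le_card _).1)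
      (fun k => (measurableSet_le measurable_fst measurable_const).inter
        (measurable_snd (measurableSet_singleton true))) (by positivity)
      (fun k hk _ =>
        measureReal_le_BH_threshold (hsuper j) hα0.le hα1.le (mem_range_succ_iff.1 hk))
  calc _ = ∫ ω, ∑ j, f j ω ∂μ :=
        integral_congr_ae (ae_of_all _ fun ω => card_filter_BHset_div_max hα0 _ _)
    _ = ∑ j, ∫ ω, f j ω ∂μ := integral_finsetSum _ fun j _ => (hf j).1
    _ ≤ ∑ _j : Fin m, α / m := sum_le_sum fun j _ => (hf j).2
    _ ≤ α := by
        rw [sum_const, card_univ, Fintype.card_fin, nsmul_eq_mul]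
        rcases m.eq_zero_or_pos with rfl | hm
        · simpa using hα0.le
        · rw [mul_div_cancel₀ _ (by positivity)]

/-- BH with marginally super-uniform p-values under independence controls a
marginal FDR-type quantity: if the pairs `(p_j, H_j)` are jointly independent across `j` and
`P(p_j ≤ t, H_j = 1) ≤ t` for all `t ∈ [0,1]`, then the BH rejection set `S` at level `α`
satisfies `E[|{j ∈ S : H_j = 1}| / max(1, |S|)] ≤ α`. -/
theorem bh_marginal_fdr_control
    {Ω : Type*} [MeasurableSpace Ω] (μ : Measure Ω) [IsProbabilityMeasure μ]
    (m : ℕ) (hm : 0 < m) (α : ℝ) (hα : α ∈ Set.Ioo (0:ℝ) 1)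
    (p : Fin m → Ω → ℝ) (H : Fin m → Ω → Bool)
    (hp : ∀ j, Measurable (p j)) (hH : ∀ j, Measurable (H j))
    (hindep : iIndepFun (fun j ω => (p j ω, H j ω)) μ)
    (hsuper : ∀ j, ∀ t ∈ Set.Icc (0:ℝ) 1,
      μ {ω | p j ω ≤ t ∧ H j ω = true} ≤ ENNReal.ofReal t) :
    ∫ ω, (((BHset m α (fun j => p j ω)).filter (fun j => H j ω = true)).card : ℝ)
        / max 1 (((BHset m α (fun j => p j ω)).card : ℝ)) ∂μ ≤ α :=
  bh_marginal_fdr_control_general μ m α hα p H hp hH hindep hsuper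
end
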